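/- Let B be an invertible d×d matrix whose d eigenvalues λ_0,…,λ_{d−1} are pairwise distinct, with eigenbasis |0⟩,…,|d−1⟩. Then a permutation-symmetric state ψ of n ≥ 2 qudits satisfies B_{(1)}ψ ∈ S if and only if ψ = Σ_{i=0}^{d−1} α_i |i⟩^{⊗n} for some coefficients α_i, i.e. ψ is a generalized GHZ state. -/
import Mathlib


open Matrix BigOperators Polynomial

/-- Permutation symmetry of an `n`-qudit state represented by its amplitudes. -/
def PSym {n d : ℕ} (ψ : (Fin n → Fin d) → ℂ) : Prop :=
  ∀ σ : Equiv.Perm (Fin n), ∀ x : Fin n → Fin d, ψ (x ∘ σ) = ψ x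

/-- The operator `B` acting on the `k`-th tensor factor (identity elsewhere). -/
noncomputable def appAt {n d : ℕ} (k : Fin n) (B : Matrix (Fin d) (Fin d) ℂ)
    (ψ : (Fin n → Fin d) → ℂ) : (Fin n → Fin d) → ℂ :=
  fun x => ∑ j : Fin d, B (x k) j * ψ (Function.update x k j)

/-- The operator `A 1 ⊗ A 2 ⊗ ⋯ ⊗ A n` acting on an `n`-qudit state. -/
noncomputable def appAll {n d : ℕ} (A : Fin n → Matrix (Fin d) (Fin d) ℂ)
    (ψ : (Fin n → Fin d) → ℂ) : (Fin n → Fin d) → ℂ :=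
  fun x => ∑ y : Fin n → Fin d, (∏ k, A k (x k) (y k)) * ψ y

lemma appAt_diag {n d : ℕ} (k : Fin n) (lam : Fin d → ℂ) (ψ : (Fin n → Fin d) → ℂ) :
    appAt k (Matrix.diagonal lam) ψ = fun x => lam (x k) * ψ x := by
  funext x
  unfold appAt
  rw [Finset.sum_eq_single (x k)]
  · simp
  · intro j _ hj
    rw [Matrix.diagonal_apply_ne _ (Ne.symm hj), zero_mul]
  · simp

lemma comp_eq_const_iff {n d : ℕ} (σ : Equiv.Perm (Fin n)) (x : Fin n → Fin d) (i : Fin d) :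
    x ∘ σ = Function.const (Fin n) i ↔ x = Function.const (Fin n) i := by
  constructor
  · intro h
    funext j
    have := congrFun h (σ.symm j)
    simpa using this
  · intro h; subst h; rfl

theorem stmt_16 {n d : ℕ} (hn : 2 ≤ n) (ψ : (Fin n → Fin d) → ℂ) (hψ : PSym ψ)
    (lam : Fin d → ℂ) (hinj : Function.Injective lam) (h0 : ∀ i, lam i ≠ 0) :
    PSym (appAt ⟨0, by omega⟩ (Matrix.diagonal lam) ψ) ↔
      ∃ α : Fin d → ℂ,
        ψ = fun x => ∑ i : Fin d,
          α i * (if x = Function.const (Fin n) i then 1 else 0) := by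
  set z : Fin n := ⟨0, by omega⟩ with hz
  rw [appAt_diag]
  constructor
  · intro h
    refine ⟨fun i => ψ (Function.const _ i), ?_⟩
    funext x
    by_cases hx : ∃ i, x = Function.const (Fin n) i
    · obtain ⟨i, rfl⟩ := hx
      rw [Finset.sum_eq_single i]
      · simp
      · intro j _ hj
        have : Function.const (Fin n) i ≠ Function.const (Fin n) j := by
          intro hc
          exact hj (congrFun hc z).symm
        simp [this]
      · simp
    · push_neg at hx
      have hsum : (∑ i : Fin d, (ψ (Function.const (Fin n) i)) *
          (if x = Function.const (Fin n) i then 1 else 0)) = 0 := by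
        apply Finset.sum_eq_zero
        intro i _
        simp [hx i]
      rw [hsum]
      -- x is not constant: find k with x k ≠ x z
      have hk : ∃ k, x k ≠ x z := by
        by_contra hc
        push_neg at hc
        exact hx (x z) (funext fun j => hc j)
      obtain ⟨k, hk⟩ := hk
      have hσ := h (Equiv.swap z k) x
      have hψ' := hψ (Equiv.swap z k) x
      simp only [Function.comp] at hσ hψ'
      rw [hψ'] at hσ
      have hswap : (Equiv.swap z k) z = k := Equiv.swap_apply_left z k
      rw [hswap] at hσ
      have : lam (x k) ≠ lam (x z) := fun hc => hk (hinj hc)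
      by_contra hne
      exact this (mul_right_cancel₀ hne hσ)
  · rintro ⟨α, rfl⟩
    intro σ x
    by_cases hx : ∃ i, x = Function.const (Fin n) i
    · obtain ⟨i, rfl⟩ := hx
      have h1 : Function.const (Fin n) i ∘ σ = Function.const (Fin n) i := rfl
      rw [h1]
    · push_neg at hx
      have h1 : (∑ i : Fin d, α i *
          (if x ∘ σ = Function.const (Fin n) i then 1 else 0)) = 0 := by
        apply Finset.sum_eq_zero
        intro i _
        have : x ∘ σ ≠ Function.const (Fin n) i := by
          exact fun hc => hx i ((comp_eq_const_iff σ x i).mp hc)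
        simp [this]
      have h2 : (∑ i : Fin d, α i *
          (if x = Function.const (Fin n) i then 1 else 0)) = 0 := by
        apply Finset.sum_eq_zero
        intro i _
        simp [hx i]
      simp only [h1, h2, mul_zero]
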